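/- For every function u : ℝ → ℂ which is locally absolutely continuous with u ∈ L²(ℝ) and u' ∈ L²(ℝ), one has the energy lower bound (1/2)∫_ℝ |u'(x)|² dx − (1/6)∫_ℝ |u(x)|^6 dx ≥ (1/2)(∫_ℝ |u'(x)|² dx)·(1 − (4/(3π²))·(∫_ℝ |u(x)|² dx)²). -/

import Mathlib

/-!
Let `P = sup |u|²`, which is finite because `|u(x)|² ≤ ∫ |u| |u'|`, and let
`G(s) = ∫₀ˢ √(P² - r²) dr`, so that `G(P) = π P² / 4` is the area of a quarter disc.
The function `G(|u|²)` is absolutely continuous with `|(G(|u|²))'| ≤ 2 √(P² - |u|⁴) |u| |u'|`.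
Being integrable, it is arbitrarily small somewhere to the left and somewhere to the right of
any point, so integrating from both sides gives `2 G(|u(x)|²) ≤ ∫ 2 √(P² - |u|⁴) |u| |u'|`.
Taking the supremum over `x` and applying Cauchy–Schwarz,
`π P² / 4 ≤ √(P² ∫|u|² - ∫|u|⁶) · √(∫|u'|²)`; optimising this quadratic constraint in `P²`
yields the sharp Gagliardo–Nirenberg inequality `π² ∫|u|⁶ ≤ 4 ∫|u'|² (∫|u|²)²`, which is the
claimed energy bound.
-/

open Real MeasureTheory intervalIntegral Set Filter

theorem AbsolutelyContinuousOnInterval.of_dist_le_mul {X Y : Type*} [PseudoMetricSpace X]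
    [PseudoMetricSpace Y] {f : ℝ → X} {F : ℝ → Y} {a b K : ℝ}
    (hF : AbsolutelyContinuousOnInterval F a b)
    (hfF : ∀ s ∈ uIcc a b, ∀ t ∈ uIcc a b, dist (f s) (f t) ≤ K * dist (F s) (F t)) :
    AbsolutelyContinuousOnInterval f a b := by
  unfold AbsolutelyContinuousOnInterval at hF ⊢
  have hKF := hF.const_mul K
  rw [mul_zero] at hKF
  refine squeeze_zero' (.of_forall fun _ ↦ Finset.sum_nonneg fun _ _ ↦ dist_nonneg) ?_ hKF
  filter_upwards [mem_inf_of_right (mem_principal_self _)] with E hE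
  rw [Finset.mul_sum]
  exact Finset.sum_le_sum fun i hi ↦ hfF _ (hE.1 i hi).1 _ (hE.1 i hi).2

theorem AbsolutelyContinuousOnInterval.abs_sub_le_integral_of_hasDerivAt {h h' w : ℝ → ℝ} {a b : ℝ}
    (hh : AbsolutelyContinuousOnInterval h a b) (hab : a ≤ b)
    (hderiv : ∀ᵐ x, x ∈ uIcc a b → HasDerivAt h (h' x) x)
    (hw : IntervalIntegrable w volume a b) (hbound : ∀ x ∈ Icc a b, |h' x| ≤ w x) :
    |h b - h a| ≤ ∫ x in a..b, w x := by
  rw [← hh.integral_deriv_eq_sub]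
  refine (abs_integral_le_integral_abs hab).trans <|
    integral_mono_ae_restrict hab hh.intervalIntegrable_deriv.abs hw ?_
  rw [EventuallyLE, ae_restrict_iff' measurableSet_Icc]
  filter_upwards [hderiv] with x hx hxab
  rw [(hx (uIcc_of_le hab ▸ hxab)).deriv]
  exact hbound x hxab

theorem MeasureTheory.IntegrableOn.le_of_forall_le_add {α : Type*} [MeasurableSpace α]
    {μ : Measure α} {f : α → ℝ} {s : Set α} (hf : IntegrableOn f s μ) (hs : MeasurableSet s)
    (hμs : μ s = ⊤) {c d : ℝ} (h : ∀ y ∈ s, c ≤ f y + d) : c ≤ d := by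
  by_contra! hdc
  have hconst : IntegrableOn (fun _ ↦ c - d) s μ := by
    refine hf.mono' aestronglyMeasurable_const ((ae_restrict_iff' hs).2 (.of_forall fun y hy ↦ ?_))
    rw [Real.norm_of_nonneg (by linarith)]
    linarith [h y hy]
  simp [integrableOn_const_iff, hμs, (sub_pos.2 hdc).ne'] at hconst

theorem two_mul_le_integral_of_abs_sub_le_integral {h w : ℝ → ℝ}
    (hh : Integrable h) (hw0 : ∀ x, 0 ≤ w x) (hw : Integrable w)
    (hinc : ∀ a b, a ≤ b → |h b - h a| ≤ ∫ t in a..b, w t) (x : ℝ) :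
    2 * h x ≤ ∫ t, w t := by
  have hIic : h x ≤ ∫ t in Iic x, w t := by
    refine hh.integrableOn.le_of_forall_le_add (measurableSet_Iic (a := x)) (by simp) fun y hy ↦ ?_
    have hyx : ∫ t in y..x, w t ≤ ∫ t in Iic x, w t := by
      rw [integral_of_le hy]
      exact setIntegral_mono_set hw.integrableOn (.of_forall hw0) Ioc_subset_Iic_self.eventuallyLE
    linarith [(abs_le.1 (hinc y x hy)).2]
  have hIoi : h x ≤ ∫ t in Ioi x, w t := by
    refine hh.integrableOn.le_of_forall_le_add (measurableSet_Ioi (a := x)) (by simp) fun y hy ↦ ?_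
    have hxy : ∫ t in x..y, w t ≤ ∫ t in Ioi x, w t := by
      rw [integral_of_le (le_of_lt hy)]
      exact setIntegral_mono_set hw.integrableOn (.of_forall hw0) Ioc_subset_Ioi_self.eventuallyLE
    linarith [(abs_le.1 (hinc x y (le_of_lt hy))).1]
  linarith [integral_Iic_add_Ioi (b := x) hw.integrableOn hw.integrableOn]

theorem integral_sqrt_one_sub_sq_zero_one : ∫ x in (0 : ℝ)..1, √(1 - x ^ 2) = π / 4 := by
  have hc : Continuous fun x : ℝ ↦ √(1 - x ^ 2) := by fun_prop
  have hsymm : ∫ x in (-1 : ℝ)..0, √(1 - x ^ 2) = ∫ x in (0 : ℝ)..1, √(1 - x ^ 2) := by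
    have := integral_comp_neg (a := (0 : ℝ)) (b := 1) fun x ↦ √(1 - x ^ 2)
    simp only [neg_zero, neg_sq] at this
    exact this.symm
  have hsplit := integral_add_adjacent_intervals (hc.intervalIntegrable (μ := volume) (-1) 0)
    (hc.intervalIntegrable 0 1)
  rw [integral_sqrt_one_sub_sq, hsymm] at hsplit
  linarith

theorem integral_sqrt_sq_sub_sq {R : ℝ} (hR : 0 ≤ R) :
    ∫ v in (0 : ℝ)..R, √(R ^ 2 - v ^ 2) = π * R ^ 2 / 4 := by
  rcases hR.eq_or_lt with rfl | hR
  · simp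
  have hscale := integral_comp_mul_left (a := 0) (b := 1) (fun v ↦ √(R ^ 2 - v ^ 2)) hR.ne'
  have hsqrt : ∀ x : ℝ, √(R ^ 2 - (R * x) ^ 2) = R * √(1 - x ^ 2) := fun x ↦ by
    rw [show R ^ 2 - (R * x) ^ 2 = R ^ 2 * (1 - x ^ 2) by ring, sqrt_mul (sq_nonneg R),
      sqrt_sq hR.le]
  simp only [hsqrt, intervalIntegral.integral_const_mul, integral_sqrt_one_sub_sq_zero_one,
    mul_zero, mul_one, smul_eq_mul] at hscale
  field_simp at hscale ⊢
  linarith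

/-- For `K > 0`: `S ≤ t m - (c t / 4)² / K`, whose maximum over `t` is `4 K m² / c²`. -/
theorem sq_mul_le_four_mul_mul_sq {c t m S K : ℝ} (hc : 0 < c) (hK : 0 ≤ K) (hSt : S ≤ t * m)
    (h : (c * t / 4) ^ 2 ≤ (t * m - S) * K) : c ^ 2 * S ≤ 4 * K * m ^ 2 := by
  rcases hK.eq_or_lt with rfl | hK
  · have ht : c * t / 4 = 0 := pow_eq_zero_iff two_ne_zero |>.1 <|
      le_antisymm (by simpa using h) (sq_nonneg _)
    obtain rfl : t = 0 := by simpa [hc.ne'] using ht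
    nlinarith [sq_nonneg c]
  · nlinarith [sq_nonneg (c ^ 2 * t - 8 * K * m), sq_nonneg c]

theorem integral_mul_le_sqrt_mul_sqrt {α : Type*} [MeasurableSpace α] {μ : Measure α}
    {f g : α → ℝ} (hf0 : ∀ a, 0 ≤ f a) (hg0 : ∀ a, 0 ≤ g a) (hf : MemLp f 2 μ)
    (hg : MemLp g 2 μ) :
    ∫ a, f a * g a ∂μ ≤ √(∫ a, f a ^ 2 ∂μ) * √(∫ a, g a ^ 2 ∂μ) := by
  have := integral_mul_le_Lp_mul_Lq_of_nonneg Real.HolderConjugate.two_two (.of_forall hf0)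
    (.of_forall hg0) (by rwa [ENNReal.ofReal_ofNat]) (by rwa [ENNReal.ofReal_ofNat])
  simpa only [Real.rpow_two, ← Real.sqrt_eq_rpow] using this

section Primitive

theorem MeasureTheory.LocallyIntegrable.intervalIntegrable {E : Type*} [NormedAddCommGroup E]
    {f : ℝ → E} (hf : LocallyIntegrable f volume) (a b : ℝ) :
    IntervalIntegrable f volume a b :=
  (hf.integrableOn_isCompact isCompact_uIcc).intervalIntegrable

variable {E : Type*} [NormedAddCommGroup E] [NormedSpace ℝ E] {u u' : ℝ → E}

theorem sub_eq_integral_of_forall_eq_add_integral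
    (hAC : ∀ x, u x = u 0 + ∫ t in (0 : ℝ)..x, u' t) (hu' : LocallyIntegrable u' volume)
    (a b : ℝ) : u b - u a = ∫ t in a..b, u' t := by
  rw [hAC b, hAC a, ← integral_interval_sub_left (hu'.intervalIntegrable 0 b)
    (hu'.intervalIntegrable 0 a)]
  abel

theorem continuous_of_forall_eq_add_integral
    (hAC : ∀ x, u x = u 0 + ∫ t in (0 : ℝ)..x, u' t) (hu' : LocallyIntegrable u' volume) :
    Continuous u :=
  (continuous_const.add (continuous_primitive hu'.intervalIntegrable 0)).congr
    fun x ↦ (hAC x).symm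

theorem ae_hasDerivAt_of_forall_eq_add_integral [CompleteSpace E]
    (hAC : ∀ x, u x = u 0 + ∫ t in (0 : ℝ)..x, u' t) (hu' : LocallyIntegrable u' volume) :
    ∀ᵐ x, HasDerivAt u (u' x) x := by
  filter_upwards [LocallyIntegrable.ae_hasDerivAt_integral hu'] with x hx
  rw [funext hAC]
  exact (hx 0).const_add _

theorem absolutelyContinuousOnInterval_of_forall_eq_add_integral
    (hAC : ∀ x, u x = u 0 + ∫ t in (0 : ℝ)..x, u' t) (hu' : LocallyIntegrable u' volume)
    (a b : ℝ) : AbsolutelyContinuousOnInterval u a b := by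
  refine ((hu'.intervalIntegrable a b).norm.absolutelyContinuousOnInterval_intervalIntegral
    (c := a) left_mem_uIcc).of_dist_le_mul (K := 1) fun s _ t _ ↦ ?_
  rw [one_mul, dist_eq_norm, dist_eq_norm, sub_eq_integral_of_forall_eq_add_integral hAC hu',
    integral_interval_sub_left (hu'.intervalIntegrable a s).norm
      (hu'.intervalIntegrable a t).norm, Real.norm_eq_abs]
  exact norm_integral_le_abs_integral_norm

end Primitive

section NormSq

variable {F : Type*} [NormedAddCommGroup F] [InnerProductSpace ℝ F] [CompleteSpace F]
  {u u' : ℝ → F} {g : ℝ → ℝ} {C : ℝ}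

theorem abs_primitive_norm_sq_sub_le_integral (hg : Continuous g) (hg0 : ∀ r, 0 ≤ g r)
    (hgC : ∀ r, g r ≤ C) (hAC : ∀ x, u x = u 0 + ∫ t in (0 : ℝ)..x, u' t)
    (hu' : LocallyIntegrable u' volume) {a b : ℝ} (hab : a ≤ b) :
    |(∫ r in (0 : ℝ)..‖u b‖ ^ 2, g r) - ∫ r in (0 : ℝ)..‖u a‖ ^ 2, g r| ≤
      ∫ x in a..b, 2 * g (‖u x‖ ^ 2) * ‖u x‖ * ‖u' x‖ := by
  have hu := continuous_of_forall_eq_add_integral hAC hu'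
  obtain ⟨B, hB⟩ := isCompact_uIcc.exists_bound_of_continuousOn (hu.continuousOn (s := uIcc a b))
  have hC : 0 ≤ C := (hg0 0).trans (hgC 0)
  have hac : AbsolutelyContinuousOnInterval (fun x ↦ ∫ r in (0 : ℝ)..‖u x‖ ^ 2, g r) a b := by
    refine (absolutelyContinuousOnInterval_of_forall_eq_add_integral hAC hu' a b).of_dist_le_mul
      (K := C * (2 * B)) fun s hs t ht ↦ ?_
    rw [dist_eq_norm, integral_interval_sub_left (hg.intervalIntegrable _ _)
      (hg.intervalIntegrable _ _)]
    calc ‖∫ r in ‖u t‖ ^ 2..‖u s‖ ^ 2, g r‖ ≤ C * |‖u s‖ ^ 2 - ‖u t‖ ^ 2| :=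
          norm_integral_le_of_norm_le_const fun r _ ↦ by
            rw [Real.norm_of_nonneg (hg0 r)]; exact hgC r
      _ = C * ((‖u s‖ + ‖u t‖) * |‖u s‖ - ‖u t‖|) := by
          rw [sq_sub_sq, abs_mul, abs_of_nonneg (by positivity)]
      _ ≤ C * (2 * B * dist (u s) (u t)) := by
          gcongr
          · linarith [(norm_nonneg _).trans (hB s hs)]
          · linarith [hB s hs, hB t ht]
          · rw [dist_eq_norm]; exact abs_norm_sub_norm_le _ _
      _ = C * (2 * B) * dist (u s) (u t) := by ring
  refine hac.abs_sub_le_integral_of_hasDerivAt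
    (h' := fun x ↦ g (‖u x‖ ^ 2) * (2 * inner ℝ (u x) (u' x))) hab ?_ ?_ fun x _ ↦ ?_
  · filter_upwards [ae_hasDerivAt_of_forall_eq_add_integral hAC hu'] with x hx _
    exact (hg.integral_hasStrictDerivAt 0 _).hasDerivAt.comp x hx.norm_sq
  · exact (hu'.intervalIntegrable a b).norm.continuousOn_mul (by fun_prop)
  · rw [abs_mul, abs_of_nonneg (hg0 _), abs_mul, abs_two]
    calc g (‖u x‖ ^ 2) * (2 * |inner ℝ (u x) (u' x)|)
        ≤ g (‖u x‖ ^ 2) * (2 * (‖u x‖ * ‖u' x‖)) := by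
          gcongr; · exact hg0 _
          exact abs_real_inner_le_norm _ _
      _ = 2 * g (‖u x‖ ^ 2) * ‖u x‖ * ‖u' x‖ := by ring

theorem two_mul_primitive_norm_sq_le_integral (hg : Continuous g) (hg0 : ∀ r, 0 ≤ g r)
    (hgC : ∀ r, g r ≤ C) (hAC : ∀ x, u x = u 0 + ∫ t in (0 : ℝ)..x, u' t)
    (hu : MemLp u 2 volume) (hu' : MemLp u' 2 volume) (x : ℝ) :
    2 * ∫ r in (0 : ℝ)..‖u x‖ ^ 2, g r ≤ ∫ t, 2 * g (‖u t‖ ^ 2) * ‖u t‖ * ‖u' t‖ := by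
  have hloc := hu'.locallyIntegrable (by norm_num)
  have hcont := continuous_of_forall_eq_add_integral hAC hloc
  have hu2 := (memLp_two_iff_integrable_sq_norm hu.1).1 hu
  have hu'2 := (memLp_two_iff_integrable_sq_norm hu'.1).1 hu'
  have hC : 0 ≤ C := (hg0 0).trans (hgC 0)
  refine two_mul_le_integral_of_abs_sub_le_integral ?_ (fun t ↦ ?_) ?_
    (fun a b hab ↦ abs_primitive_norm_sq_sub_le_integral hg hg0 hgC hAC hloc hab) x
  · refine (hu2.const_mul C).mono' ((continuous_primitive (hg.intervalIntegrable · ·) 0).comp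
      (hcont.norm.pow 2)).aestronglyMeasurable (.of_forall fun t ↦ ?_)
    refine (intervalIntegral.norm_integral_le_of_norm_le_const (C := C) fun r _ ↦ ?_).trans_eq ?_
    · rw [Real.norm_of_nonneg (hg0 r)]; exact hgC r
    · rw [sub_zero, abs_of_nonneg (sq_nonneg _)]
  · have := hg0 (‖u t‖ ^ 2)
    positivity
  · refine ((hu2.add hu'2).const_mul C).mono' ((by fun_prop : Continuous fun t ↦
      2 * g (‖u t‖ ^ 2) * ‖u t‖).aestronglyMeasurable.mul hu'.1.norm) (.of_forall fun t ↦ ?_)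
    have := hg0 (‖u t‖ ^ 2)
    have := hgC (‖u t‖ ^ 2)
    rw [Real.norm_of_nonneg (by positivity), Pi.add_apply]
    nlinarith [sq_nonneg (‖u t‖ - ‖u' t‖), norm_nonneg (u t), norm_nonneg (u' t),
      mul_nonneg (norm_nonneg (u t)) (norm_nonneg (u' t))]

theorem norm_sq_le_integral_norm_mul_norm (hAC : ∀ x, u x = u 0 + ∫ t in (0 : ℝ)..x, u' t)
    (hu : MemLp u 2 volume) (hu' : MemLp u' 2 volume) (x : ℝ) :
    ‖u x‖ ^ 2 ≤ ∫ t, ‖u t‖ * ‖u' t‖ := by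
  have := two_mul_primitive_norm_sq_le_integral continuous_const (fun _ ↦ zero_le_one)
    (fun _ ↦ le_rfl) hAC hu hu' x
  simp only [intervalIntegral.integral_const, sub_zero, smul_eq_mul, mul_one, mul_assoc,
    MeasureTheory.integral_const_mul] at this
  linarith

theorem integral_sqrt_sq_sub_sq_le (hAC : ∀ x, u x = u 0 + ∫ t in (0 : ℝ)..x, u' t)
    (hu : MemLp u 2 volume) (hu' : MemLp u' 2 volume) {P : ℝ} (hP : ∀ x, ‖u x‖ ^ 2 ≤ P)
    (x : ℝ) :
    ∫ r in (0 : ℝ)..‖u x‖ ^ 2, √(P ^ 2 - r ^ 2) ≤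
      √(∫ t, (P ^ 2 - ‖u t‖ ^ 4) * ‖u t‖ ^ 2) * √(∫ t, ‖u' t‖ ^ 2) := by
  have hP0 : 0 ≤ P := (sq_nonneg _).trans (hP 0)
  have hu4 : ∀ t, ‖u t‖ ^ 4 ≤ P ^ 2 := fun t ↦ by
    simpa [← pow_mul] using pow_le_pow_left₀ (sq_nonneg _) (hP t) 2
  have hchain := two_mul_primitive_norm_sq_le_integral (g := fun r ↦ √(P ^ 2 - r ^ 2)) (C := P)
    (by fun_prop) (fun _ ↦ sqrt_nonneg _)
    (fun r ↦ (sqrt_le_left hP0).2 (by nlinarith [sq_nonneg r])) hAC hu hu' x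
  have hcont := continuous_of_forall_eq_add_integral hAC (hu'.locallyIntegrable (by norm_num))
  set f : ℝ → ℝ := fun t ↦ √(P ^ 2 - ‖u t‖ ^ 4) * ‖u t‖ with hf
  have hfL2 : MemLp f 2 volume := by
    refine (hu.norm.const_mul P).of_le (by fun_prop) (.of_forall fun t ↦ ?_)
    rw [Real.norm_of_nonneg (by positivity), Real.norm_of_nonneg (by positivity)]
    exact mul_le_mul_of_nonneg_right
      ((sqrt_le_left hP0).2 (by linarith [pow_nonneg (norm_nonneg (u t)) 4])) (norm_nonneg _)
  have hweight : ∫ t, 2 * √(P ^ 2 - (‖u t‖ ^ 2) ^ 2) * ‖u t‖ * ‖u' t‖ =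
      2 * ∫ t, f t * ‖u' t‖ := by
    rw [← MeasureTheory.integral_const_mul]
    congr 1 with t
    simp only [hf, ← pow_mul]
    ring
  calc ∫ r in (0 : ℝ)..‖u x‖ ^ 2, √(P ^ 2 - r ^ 2) ≤ ∫ t, f t * ‖u' t‖ := by
        linarith
    _ ≤ √(∫ t, f t ^ 2) * √(∫ t, ‖u' t‖ ^ 2) :=
        integral_mul_le_sqrt_mul_sqrt (fun t ↦ by positivity) (fun t ↦ norm_nonneg _) hfL2 hu'.norm
    _ = √(∫ t, (P ^ 2 - ‖u t‖ ^ 4) * ‖u t‖ ^ 2) * √(∫ t, ‖u' t‖ ^ 2) := by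
        simp only [hf, mul_pow, sq_sqrt (sub_nonneg.2 (hu4 _))]

theorem bddAbove_range_norm_sq (hAC : ∀ x, u x = u 0 + ∫ t in (0 : ℝ)..x, u' t)
    (hu : MemLp u 2 volume) (hu' : MemLp u' 2 volume) : BddAbove (range fun x ↦ ‖u x‖ ^ 2) :=
  ⟨_, forall_mem_range.2 (norm_sq_le_integral_norm_mul_norm hAC hu hu')⟩

theorem pi_mul_iSup_norm_sq_div_four_le (hAC : ∀ x, u x = u 0 + ∫ t in (0 : ℝ)..x, u' t)
    (hu : MemLp u 2 volume) (hu' : MemLp u' 2 volume) :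
    π * (⨆ x, ‖u x‖ ^ 2) ^ 2 / 4 ≤
      √(∫ t, ((⨆ x, ‖u x‖ ^ 2) ^ 2 - ‖u t‖ ^ 4) * ‖u t‖ ^ 2) * √(∫ t, ‖u' t‖ ^ 2) := by
  have hbdd := bddAbove_range_norm_sq hAC hu hu'
  set P := ⨆ x, ‖u x‖ ^ 2
  have hP : ∀ x, ‖u x‖ ^ 2 ≤ P := le_ciSup hbdd
  have hg : Continuous fun r : ℝ ↦ √(P ^ 2 - r ^ 2) := by fun_prop
  have hG : Monotone fun s ↦ ∫ r in (0 : ℝ)..s, √(P ^ 2 - r ^ 2) := fun a b hab ↦ by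
    rw [← sub_nonneg, integral_interval_sub_left (hg.intervalIntegrable _ _)
      (hg.intervalIntegrable _ _)]
    exact intervalIntegral.integral_nonneg hab fun _ _ ↦ sqrt_nonneg _
  rw [← integral_sqrt_sq_sub_sq ((sq_nonneg _).trans (hP 0)),
    hG.map_ciSup_of_continuousAt (continuous_primitive (hg.intervalIntegrable · ·) 0).continuousAt
      hbdd]
  exact ciSup_le (integral_sqrt_sq_sub_sq_le hAC hu hu' hP)

theorem pi_sq_mul_integral_norm_pow_six_le (hAC : ∀ x, u x = u 0 + ∫ t in (0 : ℝ)..x, u' t)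
    (hu : MemLp u 2 volume) (hu' : MemLp u' 2 volume) :
    π ^ 2 * ∫ x, ‖u x‖ ^ 6 ≤ 4 * (∫ x, ‖u' x‖ ^ 2) * (∫ x, ‖u x‖ ^ 2) ^ 2 := by
  have hsup := pi_mul_iSup_norm_sq_div_four_le hAC hu hu'
  set P := ⨆ x, ‖u x‖ ^ 2
  have hP : ∀ x, ‖u x‖ ^ 2 ≤ P := le_ciSup (bddAbove_range_norm_sq hAC hu hu')
  have hdefect_nonneg : ∀ x, 0 ≤ (P ^ 2 - ‖u x‖ ^ 4) * ‖u x‖ ^ 2 := fun x ↦ by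
    have : ‖u x‖ ^ 4 ≤ P ^ 2 := by
      simpa [← pow_mul] using pow_le_pow_left₀ (sq_nonneg _) (hP x) 2
    exact mul_nonneg (sub_nonneg.2 this) (sq_nonneg _)
  have hcont := continuous_of_forall_eq_add_integral hAC (hu'.locallyIntegrable (by norm_num))
  have hu2 := (memLp_two_iff_integrable_sq_norm hu.1).1 hu
  have hu6 : Integrable (fun x ↦ ‖u x‖ ^ 6) volume := by
    refine (hu2.const_mul (P ^ 2)).mono' (by fun_prop) (.of_forall fun x ↦ ?_)
    rw [Real.norm_of_nonneg (by positivity)]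
    nlinarith [hdefect_nonneg x]
  have hdefect : ∫ x, (P ^ 2 - ‖u x‖ ^ 4) * ‖u x‖ ^ 2 =
      P ^ 2 * (∫ x, ‖u x‖ ^ 2) - ∫ x, ‖u x‖ ^ 6 := by
    rw [← MeasureTheory.integral_const_mul, ← integral_sub (hu2.const_mul _) hu6]
    congr 1 with x
    ring
  have hdefect0 : 0 ≤ ∫ x, (P ^ 2 - ‖u x‖ ^ 4) * ‖u x‖ ^ 2 := integral_nonneg hdefect_nonneg
  have hK : 0 ≤ ∫ x, ‖u' x‖ ^ 2 := integral_nonneg fun _ ↦ sq_nonneg _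
  refine sq_mul_le_four_mul_mul_sq (t := P ^ 2) pi_pos hK (by linarith) ?_
  rw [← hdefect]
  calc (π * P ^ 2 / 4) ^ 2 ≤ (√(∫ x, (P ^ 2 - ‖u x‖ ^ 4) * ‖u x‖ ^ 2) * √(∫ x, ‖u' x‖ ^ 2)) ^ 2 :=
        pow_le_pow_left₀ (by positivity) hsup 2
    _ = _ := by rw [mul_pow, sq_sqrt hdefect0, sq_sqrt hK]

end NormSq

theorem energy_lower_bound (u u' : ℝ → ℂ)
    (hAC : ∀ x : ℝ, u x = u 0 + ∫ t in (0 : ℝ)..x, u' t)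
    (hu : MemLp u 2 (volume : Measure ℝ))
    (hu' : MemLp u' 2 (volume : Measure ℝ)) :
    (1 / 2) * (∫ x : ℝ, ‖u' x‖ ^ 2) - (1 / 6) * (∫ x : ℝ, ‖u x‖ ^ 6) ≥
      (1 / 2) * (∫ x : ℝ, ‖u' x‖ ^ 2) *
        (1 - (4 / (3 * Real.pi ^ 2)) * (∫ x : ℝ, ‖u x‖ ^ 2) ^ 2) := by
  have hGN := pi_sq_mul_integral_norm_pow_six_le hAC hu hu'
  rw [ge_iff_le, ← sub_nonneg]
  calc (0 : ℝ) ≤ (4 * (∫ x, ‖u' x‖ ^ 2) * (∫ x, ‖u x‖ ^ 2) ^ 2 - π ^ 2 * ∫ x, ‖u x‖ ^ 6) /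
        (6 * π ^ 2) := div_nonneg (by linarith) (by positivity)
    _ = _ := by field_simp; ring
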